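/- Let m ≥ 5, k ≥ 1, d ≥ 1, p ≥ 1 be integers with n = p·binom(m,k)^d. If dk > 2 (equivalently, d ≥ 3 or k ≥ 3 or d = k = 2), and k ≤ m/2, then 3md/2 ≤ (9/2)·n^{1/3}. -/
import Mathlib

lemma choose_mono_half (m a b : ℕ) (hab : a ≤ b) (hb : 2 * b ≤ m) :
    Nat.choose m a ≤ Nat.choose m b := by
  induction b with
  | zero => simp_all
  | succ n ih =>
    rcases Nat.eq_or_lt_of_le hab with h | h
    · subst h; exact le_refl _
    · have h1 : a ≤ n := by omega
      have h2 : 2 * n ≤ m := by omega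
      refine (ih h1 h2).trans (Nat.choose_le_succ_of_lt_half_left ?_)
      omega

lemma d_ge_3_bound (m d : ℕ) (hm : 5 ≤ m) (hd : 3 ≤ d) : (m * d) ^ 3 ≤ 27 * m ^ d := by
  induction d with
  | zero => omega
  | succ n ih =>
    rcases Nat.lt_or_ge n 3 with h3 | h3
    · have : n = 2 := by omega
      subst this
      have : (m * (2 + 1)) ^ 3 = 27 * m ^ (2+1) := by ring
      omega
    · have key := ih (by omega)
      have h5 : 5 ^ 1 ≤ m := by simpa using hm
      have hmono : 27 * m ^ n * 1 ≤ 27 * m ^ n * m := by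
        have : 1 ≤ m := by omega
        exact Nat.mul_le_mul_left _ this
      -- (m*(n+1))^3 ≤ m * (m*n)^3  since (n+1)^3 ≤ 5 n^3 ≤ m n^3 for n ≥ 3
      have hstep : (m * (n + 1)) ^ 3 ≤ m * (m * n) ^ 3 := by
        have ha : 3 * n^2 ≤ n^3 := by nlinarith
        have hb : 3 * n ≤ n^2 := by nlinarith
        have h1 : (n+1)^3 ≤ 5 * n^3 := by nlinarith
        calc (m * (n + 1)) ^ 3 = m^3 * (n+1)^3 := by ring
        _ ≤ m^3 * (5 * n^3) := Nat.mul_le_mul_left _ h1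
        _ ≤ m^3 * (m * n^3) := by
            have : 5 * n^3 ≤ m * n^3 := Nat.mul_le_mul_right _ (by omega)
            exact Nat.mul_le_mul_left _ this
        _ = m * (m * n)^3 := by ring
      calc (m * (n + 1)) ^ 3 ≤ m * (m * n) ^ 3 := hstep
      _ ≤ m * (27 * m ^ n) := Nat.mul_le_mul_left _ key
      _ = 27 * m ^ (n+1) := by ring

lemma key_nat (m k d : ℕ) (hm : 5 ≤ m) (hk : 1 ≤ k) (hd : 1 ≤ d)
    (hdk : 2 < d * k) (hkm : 2 * k ≤ m) :
    (m * d) ^ 3 ≤ 27 * Nat.choose m k ^ d := by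
  obtain ⟨t, rfl⟩ : ∃ t, m = t + 5 := ⟨m - 5, by omega⟩
  set m := t + 5 with hmdef
  have hc1 : m ≤ Nat.choose m k := by
    have := choose_mono_half m 1 k hk hkm
    simpa [Nat.choose_one_right] using this
  rcases Nat.lt_or_ge d 3 with hd3 | hd3
  · interval_cases d
    · -- d = 1, k ≥ 3
      have hk3 : 3 ≤ k := by omega
      have hc : Nat.choose m 3 ≤ Nat.choose m k := choose_mono_half m 3 k hk3 hkm
      have h3 : Nat.descFactorial m 3 = 6 * Nat.choose m 3 := by
        simpa [Nat.factorial] using Nat.descFactorial_eq_factorial_mul_choose m 3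
      have h4 : Nat.descFactorial m 3 = (t + 3) * (t + 4) * (t + 5) := by
        simp [Nat.descFactorial, hmdef]
        ring
      have h5 : 6 * Nat.choose m 3 = (t + 3) * (t + 4) * (t + 5) := by omega
      have : 6 * (m * 1) ^ 3 ≤ 6 * (27 * Nat.choose m 3 ^ 1) := by
        simp only [pow_one, hmdef]
        nlinarith [h5]
      have h6 : Nat.choose m 3 ^ 1 ≤ Nat.choose m k ^ 1 := by simpa using hc
      omega
    · -- d = 2, k ≥ 2
      have hk2 : 2 ≤ k := by omega
      have hc : Nat.choose m 2 ≤ Nat.choose m k := choose_mono_half m 2 k hk2 hkm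
      have h3 : Nat.descFactorial m 2 = 2 * Nat.choose m 2 := by
        simpa [Nat.factorial] using Nat.descFactorial_eq_factorial_mul_choose m 2
      have h4 : Nat.descFactorial m 2 = (t + 4) * (t + 5) := by
        simp [Nat.descFactorial, hmdef]; try ring
      have h5 : 2 * Nat.choose m 2 = (t + 4) * (t + 5) := by omega
      have h7 : (m * 2) ^ 3 * 4 ≤ 27 * Nat.choose m 2 ^ 2 * 4 := by
        have : 27 * Nat.choose m 2 ^ 2 * 4 = 27 * (2 * Nat.choose m 2) ^ 2 := by ring
        rw [this, h5, hmdef]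
        nlinarith [sq_nonneg t, t.zero_le]
      have h8 : Nat.choose m 2 ^ 2 ≤ Nat.choose m k ^ 2 := Nat.pow_le_pow_left hc 2
      omega
  · -- d ≥ 3
    calc (m * d) ^ 3 ≤ 27 * m ^ d := d_ge_3_bound m d hm hd3
    _ ≤ 27 * Nat.choose m k ^ d := Nat.mul_le_mul_left _ (Nat.pow_le_pow_left hc1 d)

/-- for integers `m ≥ 5`, `k ≥ 1`, `d ≥ 1`, `p ≥ 1` with `dk > 2` and
`k ≤ m/2`, setting `n = p·C(m,k)^d`, one has `3md/2 ≤ (9/2)·n^{1/3}`. -/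
theorem large_parameters_bound (m k d p : ℕ)
    (hm : 5 ≤ m) (hk : 1 ≤ k) (hd : 1 ≤ d) (hp : 1 ≤ p)
    (hdk : 2 < d * k) (hkm : 2 * k ≤ m) :
    (3 * m * d : ℝ) / 2 ≤
      (9 / 2) * ((p * (Nat.choose m k) ^ d : ℕ) : ℝ) ^ ((1 : ℝ) / 3) := by
  set n : ℕ := p * (Nat.choose m k) ^ d with hn
  have hnat : (m * d) ^ 3 ≤ 27 * n := by
    calc (m * d) ^ 3 ≤ 27 * Nat.choose m k ^ d := key_nat m k d hm hk hd hdk hkm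
    _ ≤ 27 * n := by
        rw [hn]
        exact Nat.mul_le_mul_left _ (Nat.le_mul_of_pos_left _ hp)
  have hn0 : (0:ℝ) ≤ (n:ℝ) := Nat.cast_nonneg n
  have hroot : ((n:ℝ) ^ ((1:ℝ)/3)) ^ (3:ℕ) = (n:ℝ) := by
    rw [← Real.rpow_natCast ((n:ℝ) ^ ((1:ℝ)/3)) 3, ← Real.rpow_mul hn0]
    norm_num
  have hmd : ((m:ℝ) * d) ≤ 3 * (n:ℝ) ^ ((1:ℝ)/3) := by
    have h1 : ((m:ℝ) * d) ^ (3:ℕ) ≤ (3 * (n:ℝ) ^ ((1:ℝ)/3)) ^ (3:ℕ) := by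
      have h2 : ((m:ℝ) * d) ^ (3:ℕ) ≤ 27 * (n:ℝ) := by
        exact_mod_cast hnat
      calc ((m:ℝ) * d) ^ (3:ℕ) ≤ 27 * (n:ℝ) := h2
      _ = (3 * (n:ℝ) ^ ((1:ℝ)/3)) ^ (3:ℕ) := by rw [mul_pow, hroot]; norm_num
    have hb : (0:ℝ) ≤ 3 * (n:ℝ) ^ ((1:ℝ)/3) := by positivity
    have ha : (0:ℝ) ≤ (m:ℝ) * d := by positivity
    exact le_of_pow_le_pow_left₀ (by norm_num) hb h1
  nlinarith [hmd]
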